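/- KL is controlled by L1 distance on the γ-interior simplex. Let γ > 0 and let u, q ∈ Δ^{D-1} satisfy q(j) ≥ γ for all j (in particular q is strictly positive). Then KL(u ‖ q) ≤ (1/γ) · ‖u − q‖₁. -/
import Mathlib


/-- The probability simplex: nonnegative vectors in `ℝ^D` summing to 1. -/
def simplex (D : ℕ) : Set (Fin D → ℝ) :=
  {p | (∀ j, 0 ≤ p j) ∧ ∑ j, p j = 1}

/-- Kullback–Leibler divergence `KL(p‖q) = Σ_j p(j) log(p(j)/q(j))` with natural logarithm
and the convention `0 · log(0/q(j)) = 0` (automatic since `0 * _ = 0`). -/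
noncomputable def KLdiv {D : ℕ} (p q : Fin D → ℝ) : ℝ :=
  ∑ j, p j * Real.log (p j / q j)

/-- The `L¹` norm `‖x‖₁ = Σ_j |x(j)|` on `ℝ^D`. -/
noncomputable def l1norm {D : ℕ} (x : Fin D → ℝ) : ℝ :=
  ∑ j, |x j|

/-- **KL is controlled by L1 distance on the γ-interior simplex.**
If `γ > 0`, `u, q ∈ Δ^{D-1}` and `q(j) ≥ γ` for all `j`, then
`KL(u‖q) ≤ (1/γ) ‖u − q‖₁`. -/
theorem kl_le_l1_div_gamma (D : ℕ) (γ : ℝ) (hγ : 0 < γ)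
    (u q : Fin D → ℝ) (hu : u ∈ simplex D) (hq : q ∈ simplex D)
    (hqγ : ∀ j, γ ≤ q j) :
    KLdiv u q ≤ (1 / γ) * l1norm (fun j => u j - q j) := by
  obtain ⟨hu0, hu1⟩ := hu
  obtain ⟨hq0, hq1⟩ := hq
  have key : ∀ j, u j * Real.log (u j / q j) ≤ |u j - q j| / γ := by
    intro j
    have hb : (0:ℝ) < q j := lt_of_lt_of_le hγ (hqγ j)
    have ha1 : u j ≤ 1 := by
      have := Finset.single_le_sum (f := u) (fun i _ => hu0 i) (Finset.mem_univ j)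
      linarith [hu1 ▸ this]
    rcases eq_or_lt_of_le (hu0 j) with h0 | ha
    · simp [← h0]
      positivity
    · have hlog : Real.log (u j / q j) ≤ u j / q j - 1 :=
        Real.log_le_sub_one_of_pos (div_pos ha hb)
      have h1 : u j * Real.log (u j / q j) ≤ u j * (u j - q j) / q j := by
        have := mul_le_mul_of_nonneg_left hlog (le_of_lt ha)
        calc u j * Real.log (u j / q j) ≤ u j * (u j / q j - 1) := this
          _ = u j * (u j - q j) / q j := by field_simp
      refine h1.trans ?_
      rcases le_or_gt (q j) (u j) with hle | hlt
      · rw [abs_of_nonneg (by linarith)]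
        rw [div_le_div_iff₀ hb hγ]
        have huγ : u j * γ ≤ q j := (mul_le_of_le_one_left hγ.le ha1).trans (hqγ j)
        nlinarith [mul_nonneg (sub_nonneg.2 hle) (sub_nonneg.2 huγ)]
      · have : u j * (u j - q j) / q j ≤ 0 := by
          apply div_nonpos_of_nonpos_of_nonneg _ hb.le
          nlinarith
        refine this.trans ?_
        positivity
  calc KLdiv u q ≤ ∑ j, |u j - q j| / γ := Finset.sum_le_sum (fun j _ => key j)
    _ = (1 / γ) * l1norm (fun j => u j - q j) := by
      rw [l1norm, Finset.mul_sum]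
      exact Finset.sum_congr rfl (fun j _ => by ring)
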